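/- For any two NBC spanning trees T_i < T_j of G (in the lexicographic order), there exist an NBC spanning tree T_k < T_j and an edge x ∈ E(T_j) such that E(T_i) ∩ E(T_j) ⊆ E(T_k) ∩ E(T_j) = E(T_j) \ {x}. In other words, the lexicographic ordering is a shelling order of the NBC spanning trees of G. -/

import Mathlib

open SimpleGraph

variable {V : Type*}

/-- `T` is a spanning tree of `G`: a subgraph of `G` (on the same vertex set) that is a tree. -/
def IsSpanningTree (G T : SimpleGraph V) : Prop :=
  T ≤ G ∧ T.IsTree

/-- `cutset G T e`: the set of edges of `G` whose endpoints lie in the two different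
components of `T` with the edge `e` deleted. -/
def cutset (G T : SimpleGraph V) (e : Sym2 V) : Set (Sym2 V) :=
  {f | f ∈ G.edgeSet ∧ ∀ u v : V, f = s(u, v) → ¬ (T.deleteEdges {e}).Reachable u v}

/-- `cycset T f`: the edge set of the unique cycle of `T` with the edge `f` added
(an edge of the unicyclic connected graph `T + f` lies on the cycle iff deleting it
keeps the graph connected). -/
def cycset (T : SimpleGraph V) (f : Sym2 V) : Set (Sym2 V) :=
  {e | e ∈ (T ⊔ fromEdgeSet {f}).edgeSet ∧
    ((T ⊔ fromEdgeSet {f}).deleteEdges {e}).Connected}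

/-- An edge `e` of `T` is internally active if it is the minimum of `cutset G T e`. -/
def InternallyActive [lo : LinearOrder (Sym2 V)] (G T : SimpleGraph V) (e : Sym2 V) : Prop :=
  e ∈ T.edgeSet ∧ ∀ f ∈ cutset G T e, @LE.le (Sym2 V) lo.toLE e f

/-- `IN G T`: the set of internally inactive edges of `T`. -/
def IN [LinearOrder (Sym2 V)] (G T : SimpleGraph V) : Set (Sym2 V) :=
  {e | e ∈ T.edgeSet ∧ ¬ InternallyActive G T e}

/-- `C` is the edge set of some cycle of `G`. -/
def IsCycleEdgeSet (G : SimpleGraph V) (C : Set (Sym2 V)) : Prop :=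
  ∃ (v : V) (w : G.Walk v v), w.IsCycle ∧ C = {e | e ∈ w.edges}

/-- A broken circuit: the edge set of a cycle with its minimum edge removed. -/
def IsBrokenCircuit [lo : LinearOrder (Sym2 V)] (G : SimpleGraph V) (B : Set (Sym2 V)) : Prop :=
  ∃ (C : Set (Sym2 V)) (e : Sym2 V),
    IsCycleEdgeSet G C ∧ e ∈ C ∧ (∀ f ∈ C, @LE.le (Sym2 V) lo.toLE e f) ∧ B = C \ {e}

/-- A set of edges is NBC if it contains no broken circuit. -/
def IsNBC [LinearOrder (Sym2 V)] (G : SimpleGraph V) (S : Set (Sym2 V)) : Prop :=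
  ∀ B : Set (Sym2 V), IsBrokenCircuit G B → ¬ B ⊆ S

/-- `T` is an NBC spanning tree of `G`. -/
def IsNBCSpanningTree [LinearOrder (Sym2 V)] (G T : SimpleGraph V) : Prop :=
  IsSpanningTree G T ∧ IsNBC G T.edgeSet

/-- The edge set of `T` written as a list in increasing order. -/
noncomputable def edgeList [Fintype V] [lo : LinearOrder (Sym2 V)] (T : SimpleGraph V) :
    List (Sym2 V) :=
  (Set.toFinite T.edgeSet).toFinset.sort (fun a b : Sym2 V => @LE.le (Sym2 V) lo.toLE a b)

/-- Lexicographic order on spanning trees via their sorted edge lists. -/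
def treeLexLT [Fintype V] [lo : LinearOrder (Sym2 V)] (T T' : SimpleGraph V) : Prop :=
  List.Lex (@LT.lt (Sym2 V) lo.toLT) (edgeList T) (edgeList T')

attribute [-instance] Sym2.instPartialOrder

section Aux
open SimpleGraph

variable {V : Type*}

section ListLex
variable {α : Type*} [LinearOrder α]

lemma lex_char_of_sorted : ∀ {l₁ l₂ : List α}, l₁.Pairwise (· < ·) → l₂.Pairwise (· < ·) →
    l₁.length = l₂.length → List.Lex (· < ·) l₁ l₂ →
    ∃ a, a ∈ l₁ ∧ a ∉ l₂ ∧ ∀ b, b < a → (b ∈ l₁ ↔ b ∈ l₂) := by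
  intro l₁
  induction l₁ with
  | nil =>
    intro l₂ _ _ hlen hlex
    rw [List.length_nil] at hlen
    obtain rfl : l₂ = [] := List.eq_nil_of_length_eq_zero hlen.symm
    cases hlex
  | cons a₁ t₁ ih =>
    intro l₂ h₁ h₂ hlen hlex
    cases l₂ with
    | nil => cases hlex
    | cons a₂ t₂ =>
      rw [List.pairwise_cons] at h₁ h₂
      cases hlex with
      | rel h =>
        refine ⟨a₁, List.mem_cons_self, ?_, ?_⟩
        · intro hmem
          rcases List.mem_cons.mp hmem with rfl | hmem
          · exact absurd h (lt_irrefl _)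
          · exact absurd (h.trans (h₂.1 _ hmem)) (lt_irrefl _)
        · intro b hb
          constructor
          · intro hmem
            rcases List.mem_cons.mp hmem with rfl | hmem
            · exact absurd hb (lt_irrefl _)
            · exact absurd (hb.trans (h₁.1 _ hmem)) (lt_irrefl _)
          · intro hmem
            rcases List.mem_cons.mp hmem with rfl | hmem
            · exact absurd (hb.trans h) (lt_irrefl _)
            · exact absurd ((hb.trans h).trans (h₂.1 _ hmem)) (lt_irrefl _)
      | cons h =>
        obtain ⟨a, hat₁, hat₂, hmin⟩ :=
          ih h₁.2 h₂.2 (by simpa using hlen) h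
        have ha₁a : a₁ < a := h₁.1 _ hat₁
        refine ⟨a, List.mem_cons_of_mem _ hat₁, ?_, ?_⟩
        · intro hmem
          rcases List.mem_cons.mp hmem with rfl | hmem
          · exact absurd ha₁a (lt_irrefl _)
          · exact hat₂ hmem
        · intro b hb
          constructor
          · intro hmem
            rcases List.mem_cons.mp hmem with rfl | hmem
            · exact List.mem_cons_self
            · exact List.mem_cons_of_mem _ ((hmin b hb).mp hmem)
          · intro hmem
            rcases List.mem_cons.mp hmem with rfl | hmem
            · exact List.mem_cons_self
            · exact List.mem_cons_of_mem _ ((hmin b hb).mpr hmem)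

lemma lex_of_min_diff : ∀ {l₁ l₂ : List α}, l₁.Pairwise (· < ·) → l₂.Pairwise (· < ·) →
    l₁.length = l₂.length → ∀ {a : α}, a ∈ l₁ → a ∉ l₂ →
    (∀ b, b < a → (b ∈ l₁ ↔ b ∈ l₂)) → List.Lex (· < ·) l₁ l₂ := by
  intro l₁
  induction l₁ with
  | nil => intro l₂ _ _ _ a ha _ _; cases ha
  | cons a₁ t₁ ih =>
    intro l₂ h₁ h₂ hlen a ha hna hmin
    cases l₂ with
    | nil => simp at hlen
    | cons a₂ t₂ =>
      rw [List.pairwise_cons] at h₁ h₂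
      rcases lt_trichotomy a₁ a₂ with hlt | heq | hgt
      · exact List.Lex.rel hlt
      · subst heq
        have haa₁ : a ≠ a₁ := by rintro rfl; exact hna (List.mem_cons_self)
        have hat₁ : a ∈ t₁ := (List.mem_cons.mp ha).resolve_left haa₁
        refine List.Lex.cons (ih h₁.2 h₂.2 (by simpa using hlen) hat₁
          (fun hmem => hna (List.mem_cons_of_mem _ hmem)) ?_)
        intro b hb
        constructor
        · intro hmem
          have hb₂ := (hmin b hb).mp (List.mem_cons_of_mem _ hmem)
          rcases List.mem_cons.mp hb₂ with rfl | h
          · exact absurd (h₁.1 _ hmem) (lt_irrefl _)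
          · exact h
        · intro hmem
          have hb₁ := (hmin b hb).mpr (List.mem_cons_of_mem _ hmem)
          rcases List.mem_cons.mp hb₁ with rfl | h
          · exact absurd (h₂.1 _ hmem) (lt_irrefl _)
          · exact h
      · exfalso
        have ha₂a : a₂ < a := by
          rcases List.mem_cons.mp ha with rfl | hmem
          · exact hgt
          · exact hgt.trans (h₁.1 _ hmem)
        have := (hmin a₂ ha₂a).mpr (List.mem_cons_self)
        rcases List.mem_cons.mp this with rfl | hmem
        · exact absurd hgt (lt_irrefl _)
        · exact absurd (h₁.1 _ hmem) (not_lt.mpr hgt.le)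

end ListLex


lemma reachable_of_adj_imp {H K : SimpleGraph V}
    (h : ∀ a b : V, H.Adj a b → K.Reachable a b) {u v : V} (hr : H.Reachable u v) :
    K.Reachable u v := by
  obtain ⟨w⟩ := hr
  induction w with
  | nil => exact Reachable.refl _
  | cons ha _ ih => exact (h _ _ ha).trans ih

/-- every vertex reaches one endpoint of a deleted edge -/
lemma reach_endpoint {H : SimpleGraph V} {p q c d : V} (w : H.Walk c d)
    (hd : (H.deleteEdges {s(p,q)}).Reachable d p ∨ (H.deleteEdges {s(p,q)}).Reachable d q) :
    (H.deleteEdges {s(p,q)}).Reachable c p ∨ (H.deleteEdges {s(p,q)}).Reachable c q := by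
  induction w with
  | nil => exact hd
  | @cons a b _ ha w' ih =>
    have hd' := ih hd
    by_cases he : s(a, b) = s(p, q)
    · rw [Sym2.eq_iff] at he
      rcases he with ⟨rfl, rfl⟩ | ⟨rfl, rfl⟩
      · exact Or.inl (Reachable.refl _)
      · exact Or.inr (Reachable.refl _)
    · have hadj : (H.deleteEdges {s(p,q)}).Adj a b := by
        rw [deleteEdges_adj]
        exact ⟨ha, by simpa using he⟩
      rcases hd' with h | h
      · exact Or.inl (hadj.reachable.trans h)
      · exact Or.inr (hadj.reachable.trans h)

/-- a walk must use an edge whose deletion separates its endpoints -/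
lemma edge_mem_walk_of_not_reachable {T : SimpleGraph V} {g : Sym2 V} {a b : V}
    (hng : ¬ (T.deleteEdges {g}).Reachable a b) (w : T.Walk a b) : g ∈ w.edges := by
  by_contra hgw
  refine hng ⟨w.toDeleteEdges {g} ?_⟩
  intro e he
  simp only [Set.mem_singleton_iff]
  rintro rfl
  exact hgw he

lemma not_reachable_delete_of_mem_path {T : SimpleGraph V} (hT : T.IsAcyclic) {a b : V}
    {p : T.Walk a b} (hp : p.IsPath) {g : Sym2 V} (hg : g ∈ p.edges) :
    ¬ (T.deleteEdges {g}).Reachable a b := by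
  classical
  rintro ⟨w⟩
  have hsub : ∀ e ∈ w.edges, e ∈ T.edgeSet := by
    intro e he
    have := w.edges_subset_edgeSet he
    rw [edgeSet_deleteEdges] at this
    exact this.1
  have hnotg : ∀ e ∈ w.edges, e ≠ g := by
    intro e he
    have := w.edges_subset_edgeSet he
    rw [edgeSet_deleteEdges] at this
    simpa using this.2
  set w' : T.Walk a b := w.transfer T hsub with hw'
  have hq := (isAcyclic_iff_path_unique.mp hT) ⟨p, hp⟩ w'.toPath
  have : g ∈ (w'.toPath : T.Walk a b).edges := by rw [← hq]; exact hg
  have : g ∈ w'.edges := w'.edges_toPath_subset this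
  rw [hw', Walk.edges_transfer] at this
  exact hnotg g this rfl

/-- a tree edge is a bridge -/
lemma tree_edge_bridge {T : SimpleGraph V} (hT : T.IsAcyclic) {a b : V} (hadj : T.Adj a b) :
    ¬ (T.deleteEdges {s(a,b)}).Reachable a b := by
  have hp : (SimpleGraph.Path.singleton hadj : T.Walk a b).IsPath := (Path.singleton hadj).2
  have hg : s(a,b) ∈ (SimpleGraph.Path.singleton hadj : T.Walk a b).edges := by
    simp [SimpleGraph.Path.singleton]
  exact not_reachable_delete_of_mem_path hT hp hg

/-- in an acyclic graph T', every path of T between endpoints of a T'-edge not on the path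
must leave T' somewhere -/
lemma exists_path_edge_not_mem {T T' : SimpleGraph V} (hT' : T'.IsAcyclic)
    {a b : V} {p : T.Walk a b} (hp : p.IsPath) (he : T'.Adj a b) (hne : s(a,b) ∉ p.edges) :
    ∃ x', x' ∈ p.edges ∧ x' ∉ T'.edgeSet := by
  by_contra hcon
  push_neg at hcon
  have hsub : ∀ e ∈ p.edges, e ∈ T'.edgeSet := hcon
  set q : T'.Walk a b := p.transfer T' hsub with hq
  have hqp : q.IsPath := Walk.IsPath.transfer _ hp
  have hrev : q.reverse.IsPath := hqp.reverse
  have hcyc : (Walk.cons he (⟨q.reverse, hrev⟩ : T'.Path b a).1).IsCycle := by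
    apply SimpleGraph.Path.cons_isCycle
    intro hmem
    apply hne
    have : s(a,b) ∈ q.edges := by
      have := hmem
      rw [Walk.edges_reverse, List.mem_reverse] at this
      exact this
    rwa [hq, Walk.edges_transfer] at this
  exact hT' _ hcyc
/-- key: for NBC tree `T` and an edge `m` of `G` outside `T`, some edge strictly
smaller than `m` separates `m`'s endpoints in `T`. -/
lemma nbc_small_edge [LinearOrder (Sym2 V)] {G T : SimpleGraph V} (hle : T ≤ G)
    (hT : T.IsTree) (hnbc : IsNBC G T.edgeSet) {a b : V}
    (hmG : s(a,b) ∈ G.edgeSet) (hmT : s(a,b) ∉ T.edgeSet) :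
    ∃ g, g < s(a,b) ∧ g ∈ T.edgeSet ∧ ¬ (T.deleteEdges {g}).Reachable a b := by
  classical
  obtain ⟨w0⟩ := hT.isConnected.preconnected a b
  set p : T.Walk a b := (w0.toPath : T.Path a b).1 with hpdef
  have hp : p.IsPath := w0.toPath.2
  have hpT : ∀ e ∈ p.edges, e ∈ T.edgeSet := fun e he => p.edges_subset_edgeSet he
  have hmp : s(a,b) ∉ p.edges := fun h => hmT (hpT _ h)
  -- find small edge on p
  by_cases hex : ∃ g ∈ p.edges, g < s(a,b)
  · obtain ⟨g, hgp, hglt⟩ := hex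
    exact ⟨g, hglt, hpT _ hgp,
      not_reachable_delete_of_mem_path hT.IsAcyclic hp hgp⟩
  · exfalso
    push_neg at hex
    -- build a cycle in G through s(a,b)
    have hGadj : G.Adj a b := (mem_edgeSet G).mp hmG
    have hsub : ∀ e ∈ p.edges, e ∈ G.edgeSet := fun e he =>
      edgeSet_subset_edgeSet.mpr hle (hpT _ he)
    set q : G.Walk a b := p.transfer G hsub with hqdef
    have hqp : q.IsPath := Walk.IsPath.transfer _ hp
    have hqe : q.edges = p.edges := Walk.edges_transfer _ _
    have hcyc : (Walk.cons hGadj (⟨q.reverse, hqp.reverse⟩ : G.Path b a).1).IsCycle := by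
      apply SimpleGraph.Path.cons_isCycle
      intro hmem
      rw [Walk.edges_reverse, List.mem_reverse, hqe] at hmem
      exact hmp hmem
    set c : G.Walk a a := Walk.cons hGadj q.reverse with hcdef
    set C : Set (Sym2 V) := {e | e ∈ c.edges} with hCdef
    have hce : c.edges = s(a,b) :: q.reverse.edges := rfl
    have hmemC : ∀ e, e ∈ C ↔ (e = s(a,b) ∨ e ∈ p.edges) := by
      intro e
      rw [hCdef]
      simp only [Set.mem_setOf_eq, hce, List.mem_cons, Walk.edges_reverse,
        List.mem_reverse, hqe]
    apply hnbc (C \ {s(a,b)}) ⟨C, s(a,b), ⟨a, c, hcyc, rfl⟩, (hmemC _).mpr (Or.inl rfl), ?_, rfl⟩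
    · intro e he
      obtain ⟨heC, hne⟩ := he
      rcases (hmemC e).mp heC with rfl | hep
      · exact absurd rfl hne
      · exact hpT _ hep
    · intro f hf
      rcases (hmemC f).mp hf with rfl | hfp
      · exact le_refl _
      · exact hex f hfp

lemma mem_edgeList [Fintype V] [LinearOrder (Sym2 V)] {T : SimpleGraph V} {e : Sym2 V} :
    e ∈ edgeList T ↔ e ∈ T.edgeSet := by
  rw [edgeList, Finset.mem_sort, Set.Finite.mem_toFinset]

lemma edgeList_sorted [Fintype V] [LinearOrder (Sym2 V)] (T : SimpleGraph V) :
    (edgeList T).Pairwise (· < ·) := List.sortedLT_iff_pairwise.mp (Finset.sortedLT_sort _)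

lemma edgeList_length_of_tree [Fintype V] [LinearOrder (Sym2 V)] {T : SimpleGraph V}
    (hT : T.IsTree) : (edgeList T).length + 1 = Fintype.card V := by
  classical
  rw [edgeList, Finset.length_sort]
  letI : Fintype ↥T.edgeSet := (Set.toFinite T.edgeSet).fintype
  have he : (Set.toFinite T.edgeSet).toFinset = T.edgeFinset := by
    ext e
    rw [Set.Finite.mem_toFinset, mem_edgeFinset]
  rw [he]
  exact hT.card_edgeFinset

end Aux

/-- the lexicographic ordering is a shelling order of the NBC spanning
trees of `G`: for NBC spanning trees `Ti < Tj` there exist an NBC spanning tree `Tk < Tj`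
and an edge `x ∈ E(Tj)` with `E(Ti) ∩ E(Tj) ⊆ E(Tk) ∩ E(Tj) = E(Tj) \ {x}`. -/
theorem nbc_lex_is_shelling
    {V : Type*} [Fintype V] [LinearOrder (Sym2 V)] (G : SimpleGraph V)
    (hconn : G.Connected)
    (Ti Tj : SimpleGraph V)
    (hTi : IsNBCSpanningTree G Ti) (hTj : IsNBCSpanningTree G Tj)
    (hlt : treeLexLT Ti Tj) :
    ∃ Tk : SimpleGraph V, IsNBCSpanningTree G Tk ∧ treeLexLT Tk Tj ∧
      ∃ x ∈ Tj.edgeSet,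
        Ti.edgeSet ∩ Tj.edgeSet ⊆ Tk.edgeSet ∩ Tj.edgeSet ∧
        Tk.edgeSet ∩ Tj.edgeSet = Tj.edgeSet \ {x} := by
  classical
  obtain ⟨⟨hTile, hTitree⟩, hTinbc⟩ := hTi
  obtain ⟨⟨hTjle, hTjtree⟩, hTjnbc⟩ := hTj
  have hlenTi := edgeList_length_of_tree hTitree
  have hlenTj := edgeList_length_of_tree hTjtree
  have hlen : (edgeList Ti).length = (edgeList Tj).length := by omega
  -- Step 1: minimum of the symmetric difference
  obtain ⟨e, hei, henj, hemin⟩ :=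
    lex_char_of_sorted (edgeList_sorted Ti) (edgeList_sorted Tj) hlen hlt
  rw [mem_edgeList] at hei
  rw [mem_edgeList] at henj
  simp only [mem_edgeList] at hemin
  obtain ⟨ea, eb, rfl⟩ : ∃ a b, e = s(a, b) := Sym2.ind (fun x y => ⟨x, y, rfl⟩) e
  -- Step 2: the set Y and its minimum
  set Y : Set (Sym2 V) := {z | z ∈ G.edgeSet ∧ z ∉ Tj.edgeSet ∧ ∃ x', x' ∈ Tj.edgeSet ∧
    x' ∉ Ti.edgeSet ∧ z < x' ∧ ∀ c d : V, z = s(c, d) →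
      ¬ (Tj.deleteEdges {x'}).Reachable c d} with hYdef
  have heY : s(ea, eb) ∈ Y := by
    have heG : s(ea, eb) ∈ G.edgeSet := edgeSet_subset_edgeSet.mpr hTile hei
    obtain ⟨w0⟩ := hTjtree.isConnected.preconnected ea eb
    set p : Tj.Walk ea eb := (w0.toPath : Tj.Path ea eb).1 with hpdef
    have hp : p.IsPath := (w0.toPath : Tj.Path ea eb).2
    have hep : s(ea, eb) ∉ p.edges := fun h => henj (p.edges_subset_edgeSet h)
    have hTiadj : Ti.Adj ea eb := (mem_edgeSet Ti).mp hei
    obtain ⟨x', hx'p, hx'Ti⟩ :=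
      exists_path_edge_not_mem hTitree.IsAcyclic hp hTiadj hep
    have hx'Tj : x' ∈ Tj.edgeSet := p.edges_subset_edgeSet hx'p
    have hex' : s(ea, eb) < x' := by
      rcases lt_trichotomy x' (s(ea, eb)) with h | h | h
      · exact absurd ((hemin x' h).mpr hx'Tj) hx'Ti
      · exact absurd (h ▸ hx'Tj) henj
      · exact h
    refine ⟨heG, henj, x', hx'Tj, hx'Ti, hex', ?_⟩
    intro c d hcd hr
    have h0 : ¬ (Tj.deleteEdges {x'}).Reachable ea eb :=
      not_reachable_delete_of_mem_path hTjtree.IsAcyclic hp hx'p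
    rw [Sym2.eq_iff] at hcd
    rcases hcd with ⟨rfl, rfl⟩ | ⟨rfl, rfl⟩
    · exact h0 hr
    · exact h0 hr.symm
  have hYfin : Y.Finite := (Set.toFinite G.edgeSet).subset (fun z hz => hz.1)
  obtain ⟨y, hyY, hymin⟩ := Set.exists_min_image Y id hYfin ⟨_, heY⟩
  obtain ⟨hyG, hyTj, x, hxTj, hxTi, hyx, hxsep⟩ := hyY
  obtain ⟨u, v, rfl⟩ : ∃ a b, y = s(a, b) := Sym2.ind (fun x y => ⟨x, y, rfl⟩) y
  obtain ⟨xa, xb, rfl⟩ : ∃ a b, x = s(a, b) := Sym2.ind (fun x y => ⟨x, y, rfl⟩) x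
  have hxadj : Tj.Adj xa xb := (mem_edgeSet Tj).mp hxTj
  -- Step 3: the exchanged tree Tk
  set S : Set (Sym2 V) := insert s(u, v) Tj.edgeSet \ {s(xa, xb)} with hSdef
  set Tk : SimpleGraph V := fromEdgeSet S with hTkdef
  have hSG : S ⊆ G.edgeSet := by
    rintro z ⟨hz, -⟩
    rcases Set.mem_insert_iff.mp hz with rfl | h
    · exact hyG
    · exact edgeSet_subset_edgeSet.mpr hTjle h
  have hTkE : Tk.edgeSet = S := by
    rw [hTkdef, edgeSet_fromEdgeSet]
    ext z
    simp only [Set.mem_diff, Set.mem_setOf_eq, and_iff_left_iff_imp]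
    intro hz
    exact G.not_isDiag_of_mem_edgeSet (hSG hz)
  have hTkG : Tk ≤ G := edgeSet_subset_edgeSet.mp (by rw [hTkE]; exact hSG)
  have hxney : s(xa, xb) ≠ s(u, v) := by
    rintro h
    exact hyTj (h ▸ hxTj)
  have hyTk : s(u, v) ∈ Tk.edgeSet := by
    rw [hTkE]
    exact ⟨Set.mem_insert _ _, by simp [Ne.symm hxney]⟩
  have hTkadj : Tk.Adj u v := (mem_edgeSet Tk).mp hyTk
  have hdelTk : Tj.deleteEdges {s(xa, xb)} ≤ Tk := by
    rw [← edgeSet_subset_edgeSet, edgeSet_deleteEdges, hTkE]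
    intro z hz
    exact ⟨Set.mem_insert_of_mem _ hz.1, hz.2⟩
  -- Tk is connected
  have hTkconn : Tk.Connected := by
    rw [connected_iff]
    refine ⟨?_, hconn.nonempty⟩
    have hxaxb : Tk.Reachable xa xb := by
      obtain ⟨wu⟩ := hTjtree.isConnected.preconnected u xa
      obtain ⟨wv⟩ := hTjtree.isConnected.preconnected v xa
      have h1 := reach_endpoint (p := xa) (q := xb) wu (Or.inl (Reachable.refl _))
      have h2 := reach_endpoint (p := xa) (q := xb) wv (Or.inl (Reachable.refl _))
      have hnr : ¬ (Tj.deleteEdges {s(xa, xb)}).Reachable u v := hxsep u v rfl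
      have hylink : Tk.Reachable u v := hTkadj.reachable
      rcases h1 with h1 | h1 <;> rcases h2 with h2 | h2
      · exact absurd (h1.trans h2.symm) hnr
      · exact (Reachable.mono hdelTk h1).symm.trans
          (hylink.trans (Reachable.mono hdelTk h2))
      · exact (Reachable.mono hdelTk h2).symm.trans
          (hylink.symm.trans (Reachable.mono hdelTk h1))
      · exact absurd (h1.trans h2.symm) hnr
    intro c d
    apply reachable_of_adj_imp ?_ (hTjtree.isConnected.preconnected c d)
    intro a b hab
    by_cases hx : s(a, b) = s(xa, xb)
    · rw [Sym2.eq_iff] at hx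
      rcases hx with ⟨rfl, rfl⟩ | ⟨rfl, rfl⟩
      · exact hxaxb
      · exact hxaxb.symm
    · refine Adj.reachable ?_
      rw [← mem_edgeSet, hTkE]
      exact ⟨Set.mem_insert_of_mem _ ((mem_edgeSet Tj).mpr hab), by simpa using hx⟩
  -- Tk is acyclic
  have huv : u ≠ v := fun h =>
    G.not_isDiag_of_mem_edgeSet hyG (Sym2.mk_isDiag_iff.mpr h)
  have hTkacyc : Tk.IsAcyclic := by
    intro v0 c hc
    by_cases hy : s(u, v) ∈ c.edges
    · obtain ⟨-, hreach⟩ :=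
        adj_and_reachable_delete_edges_iff_exists_cycle.mpr ⟨v0, c, hc, hy⟩
      have hle2 : Tk \ fromEdgeSet {s(u, v)} ≤ Tj.deleteEdges {s(xa, xb)} := by
        rw [← edgeSet_subset_edgeSet, edgeSet_sdiff, hTkE, edgeSet_deleteEdges,
          edgeSet_fromEdgeSet]
        rintro z ⟨⟨hz1, hz2⟩, hz3⟩
        have hzy : z ≠ s(u, v) := by
          rintro rfl
          exact hz3 ⟨rfl, G.not_isDiag_of_mem_edgeSet hyG⟩
        rcases Set.mem_insert_iff.mp hz1 with rfl | h
        · exact absurd rfl hzy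
        · exact ⟨h, hz2⟩
      exact hxsep u v rfl (hreach.mono hle2)
    · have hsub : ∀ e2 ∈ c.edges, e2 ∈ Tj.edgeSet := by
        intro e2 he2
        have h2 := c.edges_subset_edgeSet he2
        rw [hTkE] at h2
        rcases Set.mem_insert_iff.mp h2.1 with rfl | h
        · exact absurd he2 hy
        · exact h
      exact hTjtree.IsAcyclic _ (hc.transfer hsub)
  have hTktree : Tk.IsTree := ⟨hTkconn, hTkacyc⟩
  -- Tk < Tj in the lexicographic order
  have hlenTk := edgeList_length_of_tree hTktree
  have hTkLex : treeLexLT Tk Tj := by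
    apply lex_of_min_diff (edgeList_sorted Tk) (edgeList_sorted Tj) (by omega)
      (a := s(u, v)) (mem_edgeList.mpr hyTk) (fun h => hyTj (mem_edgeList.mp h))
    intro b hb
    rw [mem_edgeList, mem_edgeList, hTkE]
    have hbx : b ≠ s(xa, xb) := ne_of_lt (hb.trans hyx)
    constructor
    · rintro ⟨h1, -⟩
      rcases Set.mem_insert_iff.mp h1 with rfl | h
      · exact absurd hb (lt_irrefl _)
      · exact h
    · intro h
      exact ⟨Set.mem_insert_of_mem _ h, by simpa using hbx⟩
  -- Tk is NBC
  have hTknbc : IsNBC G Tk.edgeSet := by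
    rintro B ⟨C, m, ⟨v0, w, hcyc, rfl⟩, hmC, hmmin, rfl⟩ hBsub
    obtain ⟨ma, mb, rfl⟩ : ∃ a b, m = s(a, b) := Sym2.ind (fun x y => ⟨x, y, rfl⟩) m
    have hmC' : s(ma, mb) ∈ w.edges := hmC
    have hBTk : {e | e ∈ w.edges} \ {s(ma, mb)} ⊆ Tk.edgeSet := hBsub
    have hBTk' : ∀ e2 ∈ w.edges, e2 ≠ s(ma, mb) → e2 ∈ Tk.edgeSet := fun e2 h1 h2 =>
      hBTk ⟨h1, h2⟩
    have hmTk : s(ma, mb) ∉ Tk.edgeSet := by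
      intro hmem
      have hsub : ∀ e2 ∈ w.edges, e2 ∈ Tk.edgeSet := by
        intro e2 he2
        by_cases h : e2 = s(ma, mb)
        · rwa [h]
        · exact hBTk' _ he2 h
      exact hTkacyc _ (hcyc.transfer hsub)
    have hmin' : ∀ f ∈ w.edges, f ≠ s(ma, mb) → s(ma, mb) < f := fun f hf hne =>
      lt_of_le_of_ne (hmmin f hf) (Ne.symm hne)
    -- a walk between the endpoints of m along the rest of the cycle
    set G' : SimpleGraph V := fromEdgeSet {e | e ∈ w.edges} with hG'def
    have hG'sub : ∀ e2 ∈ w.edges, e2 ∈ G'.edgeSet := by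
      intro e2 he2
      rw [hG'def, edgeSet_fromEdgeSet]
      exact ⟨he2, G.not_isDiag_of_mem_edgeSet (w.edges_subset_edgeSet he2)⟩
    have hmG' : s(ma, mb) ∈ (w.transfer G' hG'sub).edges := by
      rw [Walk.edges_transfer]; exact hmC'
    obtain ⟨-, hreach⟩ := adj_and_reachable_delete_edges_iff_exists_cycle.mpr
      ⟨v0, _, hcyc.transfer hG'sub, hmG'⟩
    obtain ⟨wk0⟩ := hreach
    have hwkE : ∀ e2 ∈ wk0.edges, e2 ∈ w.edges ∧ e2 ≠ s(ma, mb) := by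
      intro e2 he2
      have h2 := wk0.edges_subset_edgeSet he2
      rw [edgeSet_deleteEdges, hG'def, edgeSet_fromEdgeSet] at h2
      obtain ⟨⟨h1, hdiag⟩, h3⟩ := h2
      exact ⟨h1, h3⟩
    have hwkTk : ∀ e2 ∈ wk0.edges, e2 ∈ Tk.edgeSet := fun e2 he2 =>
      hBTk' _ (hwkE _ he2).1 (hwkE _ he2).2
    have hwkgt : ∀ e2 ∈ wk0.edges, s(ma, mb) < e2 := fun e2 he2 =>
      hmin' _ (hwkE _ he2).1 (hwkE _ he2).2
    set wk : Tk.Walk ma mb := wk0.transfer Tk hwkTk with hwkdef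
    have hwke : wk.edges = wk0.edges := Walk.edges_transfer _ _
    have hmS : s(ma, mb) ∉ S := by rw [← hTkE]; exact hmTk
    by_cases hmx : s(ma, mb) = s(xa, xb)
    · -- case m = x : contradiction with the bridge property of x in Tj
      have hTjdel : ∀ e2 ∈ wk0.edges, e2 ∈ (Tj.deleteEdges {s(xa, xb)}).edgeSet := by
        intro e2 he2
        rw [edgeSet_deleteEdges]
        have hTk2 := hwkTk _ he2
        rw [hTkE] at hTk2
        have hgt := hwkgt _ he2
        have hney : e2 ≠ s(u, v) := by
          rintro rfl
          rw [hmx] at hgt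
          exact absurd (hyx.trans hgt) (lt_irrefl _)
        obtain ⟨h1, h2⟩ := hTk2
        rcases Set.mem_insert_iff.mp h1 with h | h
        · exact absurd h hney
        · exact ⟨h, h2⟩
      have hre : (Tj.deleteEdges {s(xa, xb)}).Reachable ma mb := ⟨wk0.transfer _ hTjdel⟩
      rw [Sym2.eq_iff] at hmx
      rcases hmx with ⟨rfl, rfl⟩ | ⟨rfl, rfl⟩
      · exact tree_edge_bridge hTjtree.IsAcyclic hxadj hre
      · exact tree_edge_bridge hTjtree.IsAcyclic hxadj hre.symm
    · -- case m ∉ Tj ∪ {y}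
      have hmTj : s(ma, mb) ∉ Tj.edgeSet := by
        intro h
        exact hmS ⟨Set.mem_insert_of_mem _ h, by simpa using hmx⟩
      have hmG2 : s(ma, mb) ∈ G.edgeSet := w.edges_subset_edgeSet hmC'
      obtain ⟨g, hglt, hgTj, hgsep⟩ := nbc_small_edge hTjle hTjtree hTjnbc hmG2 hmTj
      -- (i) the rerouted walk must use y, hence m < y
      have hyin : s(u, v) ∈ wk0.edges := by
        by_contra hyn
        have hdel : ∀ e2 ∈ wk0.edges, e2 ∈ (Tj.deleteEdges {g}).edgeSet := by
          intro e2 he2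
          rw [edgeSet_deleteEdges]
          have hTk2 := hwkTk _ he2
          rw [hTkE] at hTk2
          have h2 : e2 ∈ Tj.edgeSet := by
            rcases Set.mem_insert_iff.mp hTk2.1 with h | h
            · exact absurd (h ▸ he2) hyn
            · exact h
          refine ⟨h2, ?_⟩
          simp only [Set.mem_singleton_iff]
          rintro rfl
          exact absurd (hglt.trans (hwkgt _ he2)) (lt_irrefl _)
        exact hgsep ⟨wk0.transfer _ hdel⟩
      have hmy' : s(ma, mb) < s(u, v) := hwkgt _ hyin
      -- (ii) x separates the endpoints of m in Tj
      have hxsep2 : ¬ (Tj.deleteEdges {s(xa, xb)}).Reachable ma mb := by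
        rintro ⟨w3⟩
        have hw3Tj : ∀ e2 ∈ w3.edges, e2 ∈ Tj.edgeSet := by
          intro e2 he2
          have h2 := w3.edges_subset_edgeSet he2
          rw [edgeSet_deleteEdges] at h2
          exact h2.1
        set q3 : Tj.Walk ma mb := w3.transfer Tj hw3Tj with hq3def
        set q : Tj.Path ma mb := q3.toPath with hqdef
        have hqe : ∀ e2 ∈ (q : Tj.Walk ma mb).edges, e2 ∈ w3.edges := by
          intro e2 he2
          have h2 := q3.edges_toPath_subset he2
          rwa [hq3def, Walk.edges_transfer] at h2
        have hgq : g ∈ (q : Tj.Walk ma mb).edges :=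
          edge_mem_walk_of_not_reachable hgsep q
        have hqTk : ∀ e2 ∈ (q : Tj.Walk ma mb).edges, e2 ∈ Tk.edgeSet := by
          intro e2 he2
          rw [hTkE]
          refine ⟨Set.mem_insert_of_mem _ ((q : Tj.Walk ma mb).edges_subset_edgeSet he2), ?_⟩
          have h2 := w3.edges_subset_edgeSet (hqe _ he2)
          rw [edgeSet_deleteEdges] at h2
          exact h2.2
        set qk : Tk.Walk ma mb := (q : Tj.Walk ma mb).transfer Tk hqTk with hqkdef
        have hqkp : qk.IsPath := Walk.IsPath.transfer _ q.2
        have hpk := (isAcyclic_iff_path_unique.mp hTkacyc) ⟨qk, hqkp⟩ wk.toPath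
        have hgk : g ∈ (wk.toPath : Tk.Walk ma mb).edges := by
          rw [← hpk]
          show g ∈ qk.edges
          rw [hqkdef, Walk.edges_transfer]
          exact hgq
        have hgwk : g ∈ wk0.edges := by
          rw [← hwke]
          exact wk.edges_toPath_subset hgk
        exact absurd (hwkgt _ hgwk) (not_lt.mpr hglt.le)
      -- (iii) contradiction with the minimality of y
      have hmY : s(ma, mb) ∈ Y := by
        refine ⟨hmG2, hmTj, s(xa, xb), hxTj, hxTi, hmy'.trans hyx, ?_⟩
        intro c d hcd
        rw [Sym2.eq_iff] at hcd
        rcases hcd with ⟨rfl, rfl⟩ | ⟨rfl, rfl⟩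
        · exact hxsep2
        · exact fun h => hxsep2 h.symm
      exact absurd (hymin _ hmY) (not_le.mpr hmy')
  -- final assembly
  refine ⟨Tk, ⟨⟨hTkG, hTktree⟩, hTknbc⟩, hTkLex, s(xa, xb), hxTj, ?_, ?_⟩
  · rintro z ⟨hzi, hzj⟩
    refine ⟨?_, hzj⟩
    rw [hTkE]
    refine ⟨Set.mem_insert_of_mem _ hzj, ?_⟩
    simp only [Set.mem_singleton_iff]
    rintro rfl
    exact hxTi hzi
  · ext z
    constructor
    · rintro ⟨hzk, hzj⟩
      refine ⟨hzj, ?_⟩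
      rw [hTkE] at hzk
      simpa using hzk.2
    · rintro ⟨hzj, hzx⟩
      refine ⟨?_, hzj⟩
      rw [hTkE]
      exact ⟨Set.mem_insert_of_mem _ hzj, hzx⟩
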